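/- arXiv:2603.29145 — 2 statements merged into one kernel-verified Lean document; each statement's English description precedes it below -/
import Mathlib

section
/- Let p be a prime and let E be a normed algebra over ℚ_p whose norm is ultrametric (‖x + y‖ ≤ max(‖x‖, ‖y‖)) and whose restriction to ℚ_p·1 agrees with the p-adic absolute value. Let Δ > 0, let v₁,…,v_d ∈ E, and let Q ⊆ E with 0 ∈ Q. Suppose that for every x ∈ Q and every 1 ≤ j ≤ d, dist(x + v_j, Q) ≤ Δ. Then v₁ℤ_p + ⋯ + v_dℤ_p ⊆ Q_Δ, where v_jℤ_p = {z·v_j : z ∈ ℤ_p} (scalar multiplication by p-adic integers) and Q_Δ = {y ∈ E : dist(y,Q) ≤ Δ}. -/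
open Metric Set Pointwise

noncomputable def covN {E : Type*} [PseudoMetricSpace E] (δ : ℝ) (S : Set E) : ℕ :=
  sInf {n : ℕ | ∃ T : Finset E, T.card = n ∧ S ⊆ ⋃ t ∈ T, Metric.closedBall t δ}

def IsSep {E : Type*} [PseudoMetricSpace E] (δ : ℝ) (A : Set E) : Prop :=
  ∀ x ∈ A, ∀ y ∈ A, x ≠ y → δ ≤ dist x y

def IsDSC {E : Type*} [PseudoMetricSpace E] (δ s C : ℝ) (A : Set E) : Prop :=
  ∀ x ∈ A, ∀ r : ℝ, δ ≤ r →
    (covN δ (A ∩ Metric.closedBall x r) : ℝ) ≤ C * r ^ s * (covN δ A : ℝ)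

def IsROrPadic (K : Type*) [NormedField K] : Prop :=
  (∃ φ : K ≃+* ℝ, ∀ x, ‖φ x‖ = ‖x‖) ∨
  ∃ p : ℕ, ∃ hp : p.Prime,
    letI : Fact p.Prime := ⟨hp⟩
    ∃ φ : K ≃+* ℚ_[p], ∀ x, ‖φ x‖ = ‖x‖

def RealOrComm (K : Type*) (E : Type*) [NormedField K] [Mul E] : Prop :=
  (∃ φ : K ≃+* ℝ, ∀ x, ‖φ x‖ = ‖x‖) ∨ ∀ x y : E, x * y = y * x

def AvoidsSubalg (K : Type*) {E : Type*} [NormedField K] [NormedRing E] [Algebra K E]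
    (C : ℝ) (A : Set E) : Prop :=
  ∀ F : Subalgebra K E, F ≠ ⊤ → ∃ a ∈ A, 1 / C ≤ Metric.infDist a (F : Set E)

def StronglyAvoidsSubalg (K : Type*) {E : Type*} [NormedField K] [NormedRing E] [Algebra K E]
    (C : ℝ) (A : Set E) : Prop :=
  ∀ B ⊆ A, (A.ncard : ℝ) / C ≤ (B.ncard : ℝ) →
    ∀ F : Subalgebra K E, F ≠ ⊤ → ∃ b ∈ B, 1 / C ≤ Metric.infDist b (F : Set E)

def nSumSet {E : Type*} [AddMonoid E] (n : ℕ) (A : Set E) : Set E :=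
  {x | ∃ l : List E, l.length = n ∧ (∀ a ∈ l, a ∈ A) ∧ l.sum = x}

def nProdSet {E : Type*} [Monoid E] (n : ℕ) (A : Set E) : Set E :=
  {x | ∃ l : List E, l.length = n ∧ (∀ a ∈ l, a ∈ A) ∧ l.prod = x}

/-!
In an ultrametric space a point within `Δ` of a point within `Δ` of `Q` is itself within `Δ`
of `Q`. Hence, since translation is an isometry, the closed set `Q_Δ` is carried into itself by
translation by each `v j`: the translations preserving `Q_Δ` form a closed additive submonoid
containing every `v j`. Such a submonoid contains `z • v j` for `z ∈ ℕ`, hence for `z ∈ ℤ_p` by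
density of `ℕ` in `ℤ_p`, and `Q_Δ ∋ 0`.
-/

lemma IsUltrametricDist.infDist_le_max {X : Type*} [PseudoMetricSpace X] [IsUltrametricDist X]
    (s : Set X) (x y : X) : infDist x s ≤ max (infDist y s) (dist x y) := by
  rcases s.eq_empty_or_nonempty with rfl | hs
  · simp
  refine le_of_forall_gt fun b hb => ?_
  obtain ⟨z, hz, hyz⟩ := (infDist_lt_iff hs).1 ((le_max_left _ _).trans_lt hb)
  calc infDist x s ≤ dist x z := infDist_le_dist_of_mem hz
    _ ≤ max (dist x y) (dist y z) := dist_triangle_max _ _ _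
    _ < b := max_lt ((le_max_right _ _).trans_lt hb) hyz

lemma infDist_add_le_of_forall_mem {E : Type*} [Add E] [PseudoMetricSpace E]
    [IsIsometricVAdd Eᵃᵒᵖ E] [IsUltrametricDist E] {Q : Set E} {Δ : ℝ} {v : E}
    (hv : ∀ q ∈ Q, infDist (q + v) Q ≤ Δ) {x : E} (hx : infDist x Q ≤ Δ) :
    infDist (x + v) Q ≤ Δ := by
  rcases Q.eq_empty_or_nonempty with rfl | hQ
  · simpa using hx
  refine le_of_forall_gt fun b hb => ?_
  obtain ⟨q, hq, hxq⟩ := (infDist_lt_iff hQ).1 (hx.trans_lt hb)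
  calc infDist (x + v) Q ≤ max (infDist (q + v) Q) (dist (x + v) (q + v)) :=
        IsUltrametricDist.infDist_le_max _ _ _
    _ < b := by rw [dist_add_right]; exact max_lt ((hv q hq).trans_lt hb) hxq

def translationMonoid {E : Type*} [AddMonoid E] (S : Set E) : AddSubmonoid E where
  carrier := {v | ∀ x ∈ S, x + v ∈ S}
  zero_mem' x hx := by simpa using hx
  add_mem' ha hb x hx := by simpa [add_assoc] using hb _ (ha x hx)

lemma isClosed_translationMonoid {E : Type*} [AddMonoid E] [TopologicalSpace E]
    [ContinuousAdd E] {S : Set E} (hS : IsClosed S) : IsClosed (translationMonoid S : Set E) := by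
  have : (translationMonoid S : Set E) = ⋂ x ∈ S, (x + ·) ⁻¹' S := by
    ext v
    simp [translationMonoid]
  rw [this]
  exact isClosed_biInter fun x _ => hS.preimage (continuous_const_add x)

lemma AddSubmonoid.padicInt_smul_mem {p : ℕ} [Fact p.Prime] {E : Type*} [AddCommMonoid E]
    [TopologicalSpace E] [Module ℚ_[p] E] [ContinuousSMul ℚ_[p] E] {M : AddSubmonoid E}
    (hM : IsClosed (M : Set E)) {v : E} (hv : v ∈ M) (z : ℤ_[p]) : (z : ℚ_[p]) • v ∈ M := by
  refine PadicInt.denseRange_natCast.induction_on z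
    (hM.preimage (by fun_prop : Continuous fun z : ℤ_[p] => (z : ℚ_[p]) • v)) fun n => ?_
  simpa [Nat.cast_smul_eq_nsmul] using M.nsmul_mem hv n

theorem stmt_12_general (p : ℕ) [Fact p.Prime] (E : Type*) [NormedRing E]
    [NormedAlgebra ℚ_[p] E] [IsUltrametricDist E]
    (Δ : ℝ) (hΔ : 0 < Δ) (d : ℕ) (v : Fin d → E)
    (Q : Set E) (h0 : (0 : E) ∈ Q)
    (hcl : ∀ x ∈ Q, ∀ j : Fin d, Metric.infDist (x + v j) Q ≤ Δ) :
    ∀ f : Fin d → ℤ_[p], Metric.infDist (∑ j, ((f j : ℚ_[p]) • v j)) Q ≤ Δ := by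
  intro f
  set S := {x | infDist x Q ≤ Δ}
  have hS : IsClosed S := isClosed_le (continuous_infDist_pt Q) continuous_const
  have hv (j : Fin d) : v j ∈ translationMonoid S :=
    fun _ hx => infDist_add_le_of_forall_mem (hcl · · j) hx
  have hsum : ∑ j, (f j : ℚ_[p]) • v j ∈ translationMonoid S :=
    sum_mem fun j _ =>
      AddSubmonoid.padicInt_smul_mem (isClosed_translationMonoid hS) (hv j) (f j)
  have h0S : (0 : E) ∈ S := by simp [S, infDist_zero_of_mem h0, hΔ.le]
  simpa [S] using hsum 0 h0S

theorem stmt_12 (p : ℕ) [Fact p.Prime] (E : Type*) [NormedRing E]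
    [NormedAlgebra ℚ_[p] E] [IsUltrametricDist E]
    (hext : ∀ z : ℚ_[p], ‖algebraMap ℚ_[p] E z‖ = ‖z‖)
    (Δ : ℝ) (hΔ : 0 < Δ) (d : ℕ) (v : Fin d → E)
    (Q : Set E) (h0 : (0 : E) ∈ Q)
    (hcl : ∀ x ∈ Q, ∀ j : Fin d, Metric.infDist (x + v j) Q ≤ Δ) :
    ∀ f : Fin d → ℤ_[p], Metric.infDist (∑ j, ((f j : ℚ_[p]) • v j)) Q ≤ Δ :=
  stmt_12_general p E Δ hΔ d v Q h0 hcl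
end

section
/- Let d be a positive integer and let E be a normed division algebra of dimension d over K, where K = ℝ or K = ℚ_p for a prime p. Let 0 < s ≤ σ < t ≤ d. For all sufficiently small δ, ε > 0 the following holds: if A ⊆ B(0,1) is a finite δ-separated (δ,s,δ^{-ε})-set with |A| = δ^{-σ}, and X ⊆ B(0,1) is a finite δ-separated (δ,t,δ^{-ε})-set, then the number of quintuples (a,b,c,d',x) ∈ A × A × A × A × X with ‖(a + xb) − (c + xd')‖ ≤ δ is at most δ^{-4ε} · δ^{s(t−σ+ε)/t} · |A|³ · |X|. -/
/-
Count the quintuples by summing over `(b, d) ∈ A × A` the number of `(a, c, x)` with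
`‖a + x b - (c + x d)‖ ≤ δ`. As `a + x b - (c + x d) = (x - z) (b - d)` with
`z = (c - a) (b - d)⁻¹`, for fixed `a, c` the admissible `x` lie in a ball of radius
`δ / ‖b - d‖`, so the `(δ, t)`-property of `X` allows `≲ δ^(-ε) (δ / ‖b - d‖)^t |X|` of them;
for fixed `c, x` the admissible `a` lie in one δ-ball, so there are `O(1)` of them. Use the first
bound when `‖b - d‖ > R`, summing `‖b - d‖^(-t)` over dyadic shells with the `(δ, s)`-property of
`A`, and the second when `‖b - d‖ ≤ R`, where the `(δ, s)`-property of `A` allows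
`≲ δ^(-ε) R^s |A|` choices of `d`. For `R = δ^(1 - σ/t)` both contributions are
`≲ δ^(-2ε) δ^(s(t-σ)/t) |A|³ |X|`.

The `O(1)` constants come from a bound, uniform in `δ`, on the number of δ-separated points in a
δ-ball: `E` is finite-dimensional over a locally compact field, hence proper, and every scale
`δ` is brought to scale `≈ 1` by a scalar of `K`.
-/

open Metric Set Pointwise

open Finset

theorem locallyCompactSpace_of_ringEquiv_norm_eq {K L : Type*} [NormedField K] [NormedField L]
    [LocallyCompactSpace L] (φ : K ≃+* L) (hφ : ∀ x, ‖φ x‖ = ‖x‖) : LocallyCompactSpace K :=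
  (IsometryEquiv.mk φ.toEquiv (AddMonoidHomClass.isometry_of_norm φ hφ)).toHomeomorph
    |>.locallyCompactSpace_iff.mpr inferInstance

theorem IsROrPadic.locallyCompactSpace {K : Type*} [NormedField K] (hK : IsROrPadic K) :
    LocallyCompactSpace K := by
  obtain ⟨φ, hφ⟩ | ⟨p, hp, φ, hφ⟩ := hK
  · exact locallyCompactSpace_of_ringEquiv_norm_eq φ hφ
  · have : Fact p.Prime := ⟨hp⟩
    exact locallyCompactSpace_of_ringEquiv_norm_eq φ hφ

theorem IsCompact.exists_card_le_of_isSep {X : Type*} [PseudoMetricSpace X] {K : Set X}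
    (hK : IsCompact K) {r : ℝ} (hr : 0 < r) :
    ∃ M : ℕ, ∀ S : Finset X, IsSep r (S : Set X) → ↑S ⊆ K → #S ≤ M := by
  classical
  obtain ⟨T, hTK, hT, hKT⟩ := finite_cover_balls_of_compact hK (half_pos hr)
  have hcentre : ∀ x ∈ K, ∃ y ∈ T, x ∈ ball y (r / 2) := fun x hx => by
    simpa only [Set.mem_iUnion₂, exists_prop] using hKT hx
  choose! centre hcentre_mem hmem_ball using hcentre
  refine ⟨hT.toFinset.card, fun S hS hSK => card_le_card_of_injOn centre
    (fun x hx => hT.mem_toFinset.mpr (hcentre_mem x (hSK hx))) fun x hx y hy hxy => ?_⟩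
  by_contra hne
  have hx' := mem_ball.mp (hmem_ball x (hSK hx))
  have hy' := mem_ball.mp (hmem_ball y (hSK hy))
  rw [hxy] at hx'
  linarith [hS x hx y hy hne, dist_triangle_right x y (centre y)]

theorem exists_card_filter_dist_le_of_isSep (K : Type*) [NontriviallyNormedField K]
    (E : Type*) [NormedAddCommGroup E] [NormedSpace K E] [ProperSpace E] :
    ∃ M : ℕ, ∀ δ > 0, ∀ S : Finset E, IsSep δ (S : Set E) → ∀ z, #{x ∈ S | dist x z ≤ δ} ≤ M := by
  classical
  obtain ⟨c, hc⟩ := NormedField.exists_one_lt_norm K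
  have hc0 : 0 < ‖c‖ := one_pos.trans hc
  obtain ⟨M, hM⟩ := (isCompact_closedBall (0 : E) 1).exists_card_le_of_isSep (inv_pos.mpr hc0)
  refine ⟨M, fun δ hδ S hS z => ?_⟩
  obtain ⟨m, hm_le, hm_lt⟩ := exists_mem_Ico_zpow (inv_pos.mpr hδ) hc
  -- `x ↦ c ^ m • (x - z)` maps the δ-ball around `z` into the unit ball and turns
  -- δ-separation into `‖c‖⁻¹`-separation
  set g : E → E := fun x => c ^ m • (x - z)
  have hg : ∀ x y, dist (g x) (g y) = ‖c‖ ^ m * dist x y := fun x y => by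
    rw [dist_smul₀, dist_sub_right, norm_zpow]
  have hcm : 0 < ‖c‖ ^ m := zpow_pos hc0 m
  have hg_inj : Set.InjOn g ↑({x ∈ S | dist x z ≤ δ}) := fun x _ y _ hxy => by
    have h := hg x y
    rw [hxy, dist_self, eq_comm, mul_eq_zero] at h
    exact dist_eq_zero.mp (h.resolve_left hcm.ne')
  rw [← card_image_of_injOn hg_inj]
  refine hM _ ?_ ?_
  · simp only [coe_image, coe_filter]
    rintro _ ⟨x, ⟨hx, -⟩, rfl⟩ _ ⟨y, ⟨hy, -⟩, rfl⟩ hne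
    have hxy : δ ≤ dist x y := hS x hx y hy (ne_of_apply_ne g hne)
    rw [hg]
    calc ‖c‖⁻¹ ≤ ‖c‖ ^ m * δ := by
          rw [zpow_add_one₀ hc0.ne', inv_lt_iff_one_lt_mul₀ hδ] at hm_lt
          rw [inv_le_iff_one_le_mul₀ hc0]; linarith
      _ ≤ ‖c‖ ^ m * dist x y := by gcongr
  · simp only [coe_image, coe_filter]
    rintro _ ⟨x, ⟨-, hx⟩, rfl⟩
    have hgz : g z = 0 := by simp [g]
    rw [mem_closedBall, ← hgz, hg]
    calc ‖c‖ ^ m * dist x z ≤ δ⁻¹ * δ := by gcongr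
      _ = 1 := inv_mul_cancel₀ hδ.ne'

section CoveringNumbers

variable {E : Type*} [PseudoMetricSpace E] {δ : ℝ} {M : ℕ} {S : Finset E}

theorem covN_le_card (hδ : 0 ≤ δ) : covN δ (S : Set E) ≤ #S :=
  Nat.sInf_le ⟨S, rfl, fun _ hx => Set.mem_biUnion hx (mem_closedBall_self hδ)⟩

theorem card_le_covN_mul (hδ : 0 ≤ δ) (hM : ∀ z, #{x ∈ S | dist x z ≤ δ} ≤ M) :
    #S ≤ covN δ (S : Set E) * M := by
  classical
  obtain ⟨T, hT, hST⟩ : covN δ (S : Set E) ∈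
      {n : ℕ | ∃ T : Finset E, T.card = n ∧ (S : Set E) ⊆ ⋃ t ∈ T, closedBall t δ} :=
    Nat.sInf_mem ⟨_, S, rfl, fun x hx => Set.mem_biUnion hx (mem_closedBall_self hδ)⟩
  rw [← hT]
  calc #S ≤ #(T.biUnion fun z => {x ∈ S | dist x z ≤ δ}) := Finset.card_le_card fun _ hx => by
        obtain ⟨z, hz, hxz⟩ := Set.mem_iUnion₂.mp (hST hx)
        exact mem_biUnion.mpr ⟨z, hz, mem_filter.mpr ⟨hx, hxz⟩⟩
    _ ≤ #T * M := card_biUnion_le_card_mul _ _ _ fun z _ => hM z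

theorem IsDSC.card_filter_dist_le {s C : ℝ} (hδ : 0 < δ) (hC : 0 ≤ C)
    (hM : ∀ z, #{x ∈ S | dist x z ≤ δ} ≤ M) (hS : IsDSC δ s C (S : Set E))
    (z : E) {r : ℝ} (hr : δ ≤ 2 * r) :
    (#{x ∈ S | dist x z ≤ r} : ℝ) ≤ M * C * 2 ^ s * #S * r ^ s := by
  classical
  have hr0 : 0 ≤ r := by linarith
  obtain hempty | ⟨x₀, hx₀⟩ := {x ∈ S | dist x z ≤ r}.eq_empty_or_nonempty
  · rw [hempty, Finset.card_empty, Nat.cast_zero]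
    exact mul_nonneg (by positivity) (Real.rpow_nonneg hr0 s)
  obtain ⟨hx₀S, hx₀z⟩ := mem_filter.mp hx₀
  -- all points within `r` of `z` lie within `2 r` of the point `x₀ ∈ S`
  set B := {x ∈ S | dist x x₀ ≤ 2 * r}
  have hsub : {x ∈ S | dist x z ≤ r} ⊆ B := fun x hx => by
    obtain ⟨hxS, hxz⟩ := mem_filter.mp hx
    exact mem_filter.mpr ⟨hxS, by linarith [dist_triangle_right x x₀ z]⟩
  have hB : (B : Set E) = ↑S ∩ closedBall x₀ (2 * r) := by ext; simp [B]
  have hBM : ∀ z, #{x ∈ B | dist x z ≤ δ} ≤ M := fun z =>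
    (Finset.card_le_card (monotone_filter_left _ (filter_subset _ S))).trans (hM z)
  calc (#{x ∈ S | dist x z ≤ r} : ℝ) ≤ #B := by exact_mod_cast Finset.card_le_card hsub
    _ ≤ covN δ (B : Set E) * M := by exact_mod_cast card_le_covN_mul hδ.le hBM
    _ ≤ C * (2 * r) ^ s * covN δ (S : Set E) * M := by
        rw [hB]; gcongr; exact hS x₀ hx₀S (2 * r) hr
    _ ≤ C * (2 * r) ^ s * #S * M := by
        have := Real.rpow_nonneg (hδ.le.trans hr) s
        gcongr; exact_mod_cast covN_le_card hδ.le
    _ = M * C * 2 ^ s * #S * r ^ s := by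
        rw [Real.mul_rpow zero_le_two hr0]; ring

end CoveringNumbers

noncomputable def dyadicShell (x : ℝ) : ℕ := Nat.log 2 ⌊x⌋₊

theorem two_pow_dyadicShell_le {x : ℝ} (hx : 1 ≤ x) : (2 : ℝ) ^ dyadicShell x ≤ x :=
  calc (2 : ℝ) ^ dyadicShell x ≤ ⌊x⌋₊ := by
        exact_mod_cast Nat.pow_log_le_self 2 (Nat.floor_pos.mpr hx).ne'
    _ ≤ x := Nat.floor_le (by linarith)

theorem lt_two_pow_dyadicShell_succ (x : ℝ) : x < 2 ^ (dyadicShell x + 1) :=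
  calc x < ⌊x⌋₊ + 1 := Nat.lt_floor_add_one x
    _ ≤ 2 ^ (dyadicShell x + 1) := by exact_mod_cast Nat.lt_pow_succ_log_self one_lt_two _

section Dyadic

variable {ι : Type*} (S : Finset ι) (f : ι → ℝ) {R C s t : ℝ}

theorem Finset.sum_dyadicShell_rpow_neg_le (hR : 0 < R) (ht : 0 ≤ t)
    (hcount : ∀ ρ, R ≤ ρ → (#{i ∈ S | f i ≤ ρ} : ℝ) ≤ C * ρ ^ s) (k : ℕ) :
    ∑ i ∈ {i ∈ S | R < f i} with dyadicShell (f i / R) = k, f i ^ (-t) ≤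
      C * 2 ^ s * R ^ (s - t) * (2 ^ (s - t)) ^ k := by
  classical
  have hkR : (0 : ℝ) < 2 ^ k * R := by positivity
  calc ∑ i ∈ {i ∈ S | R < f i} with dyadicShell (f i / R) = k, f i ^ (-t)
      ≤ ∑ i ∈ {i ∈ S | R < f i} with dyadicShell (f i / R) = k, (2 ^ k * R) ^ (-t) :=
        sum_le_sum fun i hi => by
          obtain ⟨⟨-, hRi⟩, rfl⟩ := by simpa using hi
          have := two_pow_dyadicShell_le ((one_le_div hR).mpr hRi.le)
          exact Real.rpow_le_rpow_of_nonpos hkR (by rwa [← le_div_iff₀ hR]) (by linarith)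
    _ = #{i ∈ {i ∈ S | R < f i} | dyadicShell (f i / R) = k} * (2 ^ k * R) ^ (-t) := by
        rw [sum_const, nsmul_eq_mul]
    _ ≤ #{i ∈ S | f i ≤ 2 ^ (k + 1) * R} * (2 ^ k * R) ^ (-t) := by
        gcongr
        intro i hi
        obtain ⟨⟨hiS, -⟩, rfl⟩ := by simpa using hi
        have := lt_two_pow_dyadicShell_succ (f i / R)
        exact mem_filter.mpr ⟨hiS, by rw [div_lt_iff₀ hR] at this; linarith⟩
    _ ≤ C * (2 ^ (k + 1) * R) ^ s * (2 ^ k * R) ^ (-t) := by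
        gcongr
        exact hcount _ (le_mul_of_one_le_left hR.le (one_le_pow₀ one_le_two))
    _ = C * 2 ^ s * R ^ (s - t) * (2 ^ (s - t)) ^ k := by
        rw [Real.mul_rpow (by positivity) hR.le, Real.mul_rpow (by positivity) hR.le,
          Real.rpow_sub hR, Real.rpow_neg hR.le, Real.rpow_neg (by positivity), pow_succ,
          Real.mul_rpow (by positivity) zero_le_two, ← Real.rpow_pow_comm zero_le_two,
          ← Real.rpow_pow_comm zero_le_two, Real.rpow_sub two_pos, div_pow, div_eq_mul_inv,
          div_eq_mul_inv]
        ring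

theorem Finset.sum_rpow_neg_le_of_card_le (hR : 0 < R) (ht : 0 ≤ t) (hst : s < t)
    (hcount : ∀ ρ, R ≤ ρ → (#{i ∈ S | f i ≤ ρ} : ℝ) ≤ C * ρ ^ s) :
    ∑ i ∈ S with R < f i, f i ^ (-t) ≤ C * 2 ^ s * R ^ (s - t) * (1 - 2 ^ (s - t))⁻¹ := by
  classical
  have hC : 0 ≤ C := nonneg_of_mul_nonneg_left
    ((Nat.cast_nonneg _).trans (hcount R le_rfl)) (Real.rpow_pos_of_pos hR s)
  have hq0 : (0 : ℝ) ≤ 2 ^ (s - t) := by positivity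
  have hq1 : (2 : ℝ) ^ (s - t) < 1 := Real.rpow_lt_one_of_one_lt_of_neg one_lt_two (by linarith)
  set T := {i ∈ S | R < f i}
  set shells := T.image fun i => dyadicShell (f i / R)
  calc ∑ i ∈ T, f i ^ (-t)
      = ∑ k ∈ shells, ∑ i ∈ T with dyadicShell (f i / R) = k, f i ^ (-t) :=
        (sum_fiberwise_of_maps_to (fun i hi => mem_image_of_mem _ hi) _).symm
    _ ≤ ∑ k ∈ shells, C * 2 ^ s * R ^ (s - t) * (2 ^ (s - t)) ^ k :=
        sum_le_sum fun k _ => S.sum_dyadicShell_rpow_neg_le f hR ht hcount k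
    _ = C * 2 ^ s * R ^ (s - t) * ∑ k ∈ shells, (2 ^ (s - t)) ^ k := (mul_sum ..).symm
    _ ≤ C * 2 ^ s * R ^ (s - t) * ∑' k : ℕ, ((2 : ℝ) ^ (s - t)) ^ k := by
        gcongr
        exact (summable_geometric_of_lt_one hq0 hq1).sum_le_tsum _ fun k _ => by positivity
    _ = C * 2 ^ s * R ^ (s - t) * (1 - 2 ^ (s - t))⁻¹ := by
        rw [tsum_geometric_of_lt_one hq0 hq1]

end Dyadic

section Energy

variable {E : Type*} [NormedDivisionRing E] {δ C R s t : ℝ} {M : ℕ} {A X : Finset E}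

theorem ncard_energy_eq_card (A X : Finset E) (δ : ℝ) :
    Set.ncard {q : E × E × E × E × E |
        q.1 ∈ (A : Set E) ∧ q.2.1 ∈ (A : Set E) ∧ q.2.2.1 ∈ (A : Set E) ∧
        q.2.2.2.1 ∈ (A : Set E) ∧ q.2.2.2.2 ∈ (X : Set E) ∧
        ‖(q.1 + q.2.2.2.2 * q.2.1) - (q.2.2.1 + q.2.2.2.2 * q.2.2.2.1)‖ ≤ δ} =
      #{q ∈ A ×ˢ A ×ˢ A ×ˢ A ×ˢ X |
        ‖q.1 + q.2.2.2.2 * q.2.1 - (q.2.2.1 + q.2.2.2.2 * q.2.2.2.1)‖ ≤ δ} := by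
  rw [← Set.ncard_coe_finset]
  congr 1
  ext
  simp [and_assoc]

theorem card_energy_eq_sum (A X : Finset E) (δ : ℝ) :
    #{q ∈ A ×ˢ A ×ˢ A ×ˢ A ×ˢ X |
        ‖q.1 + q.2.2.2.2 * q.2.1 - (q.2.2.1 + q.2.2.2.2 * q.2.2.2.1)‖ ≤ δ} =
      ∑ b ∈ A, ∑ d ∈ A, ∑ a ∈ A, ∑ c ∈ A, #{x ∈ X | ‖a + x * b - (c + x * d)‖ ≤ δ} := by
  simp only [card_filter, sum_product]
  rw [sum_comm]
  exact sum_congr rfl fun b _ => (sum_congr rfl fun a _ => sum_comm).trans sum_comm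

theorem norm_add_mul_sub_add_mul (a c x : E) {b d : E} (hbd : b ≠ d) :
    ‖a + x * b - (c + x * d)‖ = dist x ((c - a) * (b - d)⁻¹) * dist d b := by
  rw [dist_eq_norm, dist_eq_norm', ← norm_mul, sub_mul,
    inv_mul_cancel_right₀ (sub_ne_zero.mpr hbd)]
  congr 1
  noncomm_ring

theorem sum_card_collisions_le (hA : ∀ z, #{a ∈ A | dist a z ≤ δ} ≤ M) (b d : E) :
    ∑ a ∈ A, ∑ c ∈ A, #{x ∈ X | ‖a + x * b - (c + x * d)‖ ≤ δ} ≤ #A * #X * M := by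
  simp only [card_filter]
  rw [sum_comm]
  calc ∑ c ∈ A, ∑ a ∈ A, ∑ x ∈ X, (if ‖a + x * b - (c + x * d)‖ ≤ δ then 1 else 0)
      = ∑ c ∈ A, ∑ x ∈ X, #{a ∈ A | dist a (c + x * d - x * b) ≤ δ} := by
        refine sum_congr rfl fun c _ => ?_
        rw [sum_comm]
        refine sum_congr rfl fun x _ => ?_
        rw [card_filter]
        refine sum_congr rfl fun a _ => ?_
        rw [dist_eq_norm, show a - (c + x * d - x * b) = a + x * b - (c + x * d) by abel]
    _ ≤ ∑ _c ∈ A, ∑ _x ∈ X, M := sum_le_sum fun c _ => sum_le_sum fun x _ => hA _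
    _ = #A * #X * M := by simp only [sum_const, smul_eq_mul, mul_assoc]

theorem card_collisions_le_of_ne (hδ : 0 < δ) (hC : 0 ≤ C)
    (hX : ∀ z, #{x ∈ X | dist x z ≤ δ} ≤ M) (hXdsc : IsDSC δ t C (X : Set E))
    (a c : E) {b d : E} (hbd : b ≠ d) (hdb : dist d b ≤ 2) :
    (#{x ∈ X | ‖a + x * b - (c + x * d)‖ ≤ δ} : ℝ) ≤
      M * C * 2 ^ t * #X * δ ^ t * dist d b ^ (-t) := by
  have hρ : 0 < dist d b := dist_pos.mpr hbd.symm
  calc (#{x ∈ X | ‖a + x * b - (c + x * d)‖ ≤ δ} : ℝ)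
      ≤ #{x ∈ X | dist x ((c - a) * (b - d)⁻¹) ≤ δ / dist d b} := by
        refine Nat.cast_le.mpr (card_le_card (monotone_filter_right X fun x _ h => ?_))
        rwa [le_div_iff₀ hρ, ← norm_add_mul_sub_add_mul a c x hbd]
    _ ≤ M * C * 2 ^ t * #X * (δ / dist d b) ^ t :=
        hXdsc.card_filter_dist_le hδ hC hX _ (by
          rw [← mul_div_assoc, le_div_iff₀ hρ]; nlinarith)
    _ = M * C * 2 ^ t * #X * δ ^ t * dist d b ^ (-t) := by
        rw [Real.div_rpow hδ.le hρ.le, Real.rpow_neg hρ.le]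
        ring

section FixedB

variable (hδ : 0 < δ) (hδR : δ ≤ R) (hC : 0 ≤ C) (hA : ∀ z, #{a ∈ A | dist a z ≤ δ} ≤ M)
  (hAdsc : IsDSC δ s C (A : Set E)) (b : E)
include hδ hδR hC hA hAdsc

theorem sum_card_collisions_near_le :
    ∑ d ∈ A with dist d b ≤ R, ∑ a ∈ A, ∑ c ∈ A,
        (#{x ∈ X | ‖a + x * b - (c + x * d)‖ ≤ δ} : ℝ) ≤
      M ^ 2 * C * 2 ^ s * R ^ s * #A ^ 2 * #X := by
  calc _ ≤ ∑ d ∈ A with dist d b ≤ R, ((#A * #X * M : ℕ) : ℝ) :=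
        sum_le_sum fun d _ => by exact_mod_cast sum_card_collisions_le hA b d
    _ = #{d ∈ A | dist d b ≤ R} * (#A * #X * M) := by
        simp only [sum_const, nsmul_eq_mul, Nat.cast_mul]
    _ ≤ M * C * 2 ^ s * #A * R ^ s * (#A * #X * M) := by
        gcongr; exact hAdsc.card_filter_dist_le hδ hC hA b (by linarith)
    _ = _ := by ring

theorem sum_card_collisions_far_le (ht : 0 ≤ t) (hst : s < t)
    (hX : ∀ z, #{x ∈ X | dist x z ≤ δ} ≤ M) (hXdsc : IsDSC δ t C (X : Set E))
    (hA1 : (A : Set E) ⊆ closedBall 0 1) (hb : b ∈ A) :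
    ∑ d ∈ A with R < dist d b, ∑ a ∈ A, ∑ c ∈ A,
        (#{x ∈ X | ‖a + x * b - (c + x * d)‖ ≤ δ} : ℝ) ≤
      M ^ 2 * C ^ 2 * 2 ^ s * 2 ^ (s + t) * (1 - 2 ^ (s - t))⁻¹ * δ ^ t * R ^ (s - t) *
        #A ^ 3 * #X := by
  have hR : 0 < R := hδ.trans_le hδR
  calc _ ≤ ∑ d ∈ A with R < dist d b, #A ^ 2 * (M * C * 2 ^ t * #X * δ ^ t * dist d b ^ (-t)) :=
        sum_le_sum fun d hd => by
          obtain ⟨hdA, hRd⟩ := mem_filter.mp hd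
          have hbd : b ≠ d := fun h => by rw [h, dist_self] at hRd; linarith
          have hdb : dist d b ≤ 2 := by
            linarith [dist_triangle_right d b 0, mem_closedBall.mp (hA1 hdA),
              mem_closedBall.mp (hA1 hb)]
          calc _ ≤ ∑ _a ∈ A, ∑ _c ∈ A, M * C * 2 ^ t * #X * δ ^ t * dist d b ^ (-t) :=
                sum_le_sum fun a _ => sum_le_sum fun c _ =>
                  card_collisions_le_of_ne hδ hC hX hXdsc a c hbd hdb
            _ = _ := by simp only [sum_const, nsmul_eq_mul]; ring
    _ = #A ^ 2 * (M * C * 2 ^ t * #X * δ ^ t) * ∑ d ∈ A with R < dist d b, dist d b ^ (-t) := by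
        rw [mul_sum]; exact sum_congr rfl fun d _ => by ring
    _ ≤ #A ^ 2 * (M * C * 2 ^ t * #X * δ ^ t) *
          (M * C * 2 ^ s * #A * 2 ^ s * R ^ (s - t) * (1 - 2 ^ (s - t))⁻¹) := by
        gcongr
        exact A.sum_rpow_neg_le_of_card_le (fun d => dist d b) hR ht hst fun ρ hρ =>
          hAdsc.card_filter_dist_le hδ hC hA b (by linarith)
    _ = _ := by rw [Real.rpow_add two_pos]; ring

end FixedB

theorem card_energy_le (hδ : 0 < δ) (hδR : δ ≤ R) (hC : 0 ≤ C) (ht : 0 ≤ t) (hst : s < t)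
    (hA : ∀ z, #{a ∈ A | dist a z ≤ δ} ≤ M) (hX : ∀ z, #{x ∈ X | dist x z ≤ δ} ≤ M)
    (hA1 : (A : Set E) ⊆ closedBall 0 1) (hAdsc : IsDSC δ s C (A : Set E))
    (hXdsc : IsDSC δ t C (X : Set E)) :
    (#{q ∈ A ×ˢ A ×ˢ A ×ˢ A ×ˢ X |
        ‖q.1 + q.2.2.2.2 * q.2.1 - (q.2.2.1 + q.2.2.2.2 * q.2.2.2.1)‖ ≤ δ} : ℝ) ≤
      M ^ 2 * C * 2 ^ s * (R ^ s + C * (2 ^ (s + t) * (1 - 2 ^ (s - t))⁻¹) * δ ^ t * #A *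
        R ^ (s - t)) * #A ^ 3 * #X := by
  rw [card_energy_eq_sum]
  push_cast
  calc _ = ∑ b ∈ A, (∑ d ∈ A with dist d b ≤ R, ∑ a ∈ A, ∑ c ∈ A,
          (#{x ∈ X | ‖a + x * b - (c + x * d)‖ ≤ δ} : ℝ) +
        ∑ d ∈ A with R < dist d b, ∑ a ∈ A, ∑ c ∈ A,
          (#{x ∈ X | ‖a + x * b - (c + x * d)‖ ≤ δ} : ℝ)) := by
        refine sum_congr rfl fun b _ => ?_
        simp only [← not_lt]
        exact (sum_filter_not_add_sum_filter _ _ _).symm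
    _ ≤ ∑ _b ∈ A, (M ^ 2 * C * 2 ^ s * R ^ s * #A ^ 2 * #X + M ^ 2 * C ^ 2 * 2 ^ s *
          2 ^ (s + t) * (1 - 2 ^ (s - t))⁻¹ * δ ^ t * R ^ (s - t) * #A ^ 3 * #X) :=
        sum_le_sum fun b hb => add_le_add
          (sum_card_collisions_near_le hδ hδR hC hA hAdsc b)
          (sum_card_collisions_far_le hδ hδR hC hA hAdsc b ht hst hX hXdsc hA1 hb)
    _ = _ := by rw [sum_const, nsmul_eq_mul]; ring

end Energy

theorem exists_forall_le_rpow_neg (L : ℝ) {γ : ℝ} (hγ : 0 < γ) :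
    ∃ δ₀ > 0, ∀ δ, 0 < δ → δ ≤ δ₀ → δ ≤ 1 ∧ L ≤ δ ^ (-γ) := by
  have hL : 0 < max L 1 := lt_max_of_lt_right one_pos
  refine ⟨min 1 (max L 1 ^ (-γ)⁻¹), by positivity,
    fun δ hδ hδ₀ => ⟨hδ₀.trans (min_le_left _ _), ?_⟩⟩
  exact (le_max_left L 1).trans <|
    (Real.le_rpow_inv_iff_of_neg hδ hL (neg_neg_of_pos hγ)).mp (hδ₀.trans (min_le_right _ _))

theorem energy_bound_le_rpow {δ ε s σ t K N : ℝ} {M : ℕ} (hδ : 0 < δ) (hδ1 : δ ≤ 1)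
    (hε : 0 < ε) (ht : 0 < t) (hN : N = δ ^ (-σ))
    (hM : M ^ 2 * 2 ^ s * (1 + K) ≤ δ ^ (-(ε * (2 - s / t)))) :
    M ^ 2 * δ ^ (-ε) * 2 ^ s * ((δ ^ ((t - σ) / t)) ^ s +
        δ ^ (-ε) * K * δ ^ t * N * (δ ^ ((t - σ) / t)) ^ (s - t)) ≤
      δ ^ (-(4 * ε)) * δ ^ (s * (t - σ + ε) / t) := by
  set C := δ ^ (-ε)
  set R := δ ^ ((t - σ) / t)
  have hC : 1 ≤ C := Real.one_le_rpow_of_pos_of_le_one_of_nonpos hδ hδ1 (by linarith)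
  -- the scale `R` is chosen so that both terms are of the same size
  have hRs : δ ^ t * N * R ^ (s - t) = R ^ s := by
    rw [hN, ← Real.rpow_mul hδ.le, ← Real.rpow_mul hδ.le, ← Real.rpow_add hδ,
      ← Real.rpow_add hδ]
    congr 1
    field_simp
    ring
  calc M ^ 2 * C * 2 ^ s * (R ^ s + C * K * δ ^ t * N * R ^ (s - t))
      = M ^ 2 * 2 ^ s * (C + C ^ 2 * K) * R ^ s := by rw [← hRs]; ring
    _ ≤ M ^ 2 * 2 ^ s * (C ^ 2 + C ^ 2 * K) * R ^ s := by gcongr; nlinarith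
    _ = M ^ 2 * 2 ^ s * (1 + K) * C ^ 2 * R ^ s := by ring
    _ ≤ δ ^ (-(ε * (2 - s / t))) * C ^ 2 * R ^ s := by gcongr
    _ = δ ^ (-(4 * ε)) * δ ^ (s * (t - σ + ε) / t) := by
        rw [← Real.rpow_natCast, ← Real.rpow_mul hδ.le, ← Real.rpow_mul hδ.le,
          ← Real.rpow_add hδ, ← Real.rpow_add hδ, ← Real.rpow_add hδ]
        congr 1
        field_simp
        ring

theorem stmt_14 :
    ∀ d : ℕ, 0 < d →
      ∀ (K : Type) [NontriviallyNormedField K], IsROrPadic K →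
        ∀ (E : Type) [NormedDivisionRing E] [NormedAlgebra K E],
          FiniteDimensional K E → Module.finrank K E = d →
          ∀ s σ t : ℝ, 0 < s → s ≤ σ → σ < t → t ≤ (d : ℝ) →
            ∃ ε₀ : ℝ, 0 < ε₀ ∧ ∀ ε : ℝ, 0 < ε → ε ≤ ε₀ →
              ∃ δ₀ : ℝ, 0 < δ₀ ∧ ∀ δ : ℝ, 0 < δ → δ ≤ δ₀ →
                ∀ A X : Set E,
                  A ⊆ Metric.closedBall 0 1 → A.Finite → IsSep δ A →
                  IsDSC δ s (δ ^ (-ε)) A → (A.ncard : ℝ) = δ ^ (-σ) →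
                  X ⊆ Metric.closedBall 0 1 → X.Finite → IsSep δ X →
                  IsDSC δ t (δ ^ (-ε)) X →
                  (Set.ncard {q : E × E × E × E × E |
                      q.1 ∈ A ∧ q.2.1 ∈ A ∧ q.2.2.1 ∈ A ∧ q.2.2.2.1 ∈ A ∧ q.2.2.2.2 ∈ X ∧
                      ‖(q.1 + q.2.2.2.2 * q.2.1) - (q.2.2.1 + q.2.2.2.2 * q.2.2.2.1)‖ ≤ δ} : ℝ) ≤
                    δ ^ (-(4 * ε)) * δ ^ (s * (t - σ + ε) / t) *
                      (A.ncard : ℝ) ^ 3 * (X.ncard : ℝ) := by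
  intro d _ K _ hK E _ _ _ _ s σ t hs hsσ hσt _
  have := hK.locallyCompactSpace
  have := FiniteDimensional.proper K E
  obtain ⟨M, hM⟩ := exists_card_filter_dist_le_of_isSep K E
  have ht : 0 < t := by linarith
  refine ⟨1, one_pos, fun ε hε _ => ?_⟩
  obtain ⟨δ₀, hδ₀, hsmall⟩ :=
    exists_forall_le_rpow_neg (M ^ 2 * 2 ^ s * (1 + 2 ^ (s + t) * (1 - 2 ^ (s - t))⁻¹))
      (mul_pos hε (by rw [sub_pos, div_lt_iff₀ ht]; linarith) : 0 < ε * (2 - s / t))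
  refine ⟨δ₀, hδ₀, fun δ hδ hδδ₀ A X hA1 hAfin hAsep hAdsc hAcard _ hXfin hXsep hXdsc => ?_⟩
  obtain ⟨hδ1, hL⟩ := hsmall δ hδ hδδ₀
  lift A to Finset E using hAfin
  lift X to Finset E using hXfin
  simp only [Set.ncard_coe_finset] at hAcard ⊢
  have hδR : δ ≤ δ ^ ((t - σ) / t) := Real.self_le_rpow_of_le_one hδ.le hδ1 (by
    rw [div_le_one ht]; linarith)
  rw [ncard_energy_eq_card]
  refine (card_energy_le hδ hδR (by positivity) ht.le (by linarith) (hM δ hδ A hAsep)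
    (hM δ hδ X hXsep) hA1 hAdsc hXdsc).trans ?_
  gcongr ?_ * _ * _
  exact energy_bound_le_rpow hδ hδ1 hε ht hAcard hL
end
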